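/- Let A and Y be finite nonempty index sets, and adopt the setting where for each a ∈ A, P̄_{a,y} is the empirical frequency of the measurable event E_{a,y} over n_a i.i.d. samples, P_{a,y} = Pr[X^a_1 ∈ E_{a,y}], and r_{a,y} are Laplace Lap(1/ε) random variables each independent of the corresponding sample family. Let n_min = min_{a ∈ A} n_a, let t > 0 and assume ε ≥ t. Then Pr[∃ a ∈ A, y ∈ Y : |(P̄_{a,y} + r_{a,y}/n_a) − P_{a,y}| > t] ≤ 3·|A|·|Y|·exp(−n_min·t²/2). Consequently, if n_min ≥ (2/t²)·ln(3·|A|·|Y|/δ), equivalently (with t = α/2) n_min ≥ (8/α²)·ln(3·|A|·|Y|/δ), then this probability is at most δ. -/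

import Mathlib

open MeasureTheory ProbabilityTheory Real Set
open scoped ENNReal NNReal

/-!
The noisy estimate of `P_{a,y}` misses by more than `t` only if the empirical frequency misses
by more than `t / 2`, which by Hoeffding's inequality has probability at most
`2 exp (-n t² / 2)`, or the scaled noise `r / n` exceeds `t / 2`, which for `Lap (1 / ε)` noise
has probability exactly `exp (-n t ε / 2) ≤ exp (-n t² / 2)` when `t ≤ ε`. A union bound over
`A × Y` and `n_min ≤ n_a` give the tail bound; the sample-size statements are algebra on it.
-/

noncomputable section

def laplacePDF (B x : ℝ) : ℝ := 1 / (2 * B) * exp (-|x| / B)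

def laplaceMeasure (B : ℝ) : Measure ℝ :=
  volume.withDensity fun x => ENNReal.ofReal (laplacePDF B x)

end

section Laplace

variable {B u : ℝ}

lemma laplacePDF_nonneg (hB : 0 < B) (x : ℝ) : 0 ≤ laplacePDF B x := by
  unfold laplacePDF; positivity

lemma laplaceMeasure_Ioi (hB : 0 < B) (hu : 0 ≤ u) :
    laplaceMeasure B (Ioi u) = ENNReal.ofReal (exp (-u / B) / 2) := by
  have hpdf : EqOn (laplacePDF B) (fun x => 1 / (2 * B) * exp (-B⁻¹ * x)) (Ioi u) :=
    fun x hx => by simp only [laplacePDF, abs_of_pos (hu.trans_lt hx)]; ring_nf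
  have hexp : IntegrableOn (fun x => 1 / (2 * B) * exp (-B⁻¹ * x)) (Ioi u) :=
    (integrableOn_exp_mul_Ioi (by simpa using hB) u).const_mul _
  rw [laplaceMeasure, withDensity_apply _ measurableSet_Ioi,
    ← ofReal_integral_eq_lintegral_ofReal (hexp.congr_fun hpdf.symm measurableSet_Ioi)
      (ae_of_all _ (laplacePDF_nonneg hB)),
    setIntegral_congr_fun measurableSet_Ioi hpdf, integral_const_mul,
    integral_exp_mul_Ioi (by simpa using hB)]
  congr 1
  field_simp

lemma laplaceMeasure_Iio (hB : 0 < B) (hu : 0 ≤ u) :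
    laplaceMeasure B (Iio (-u)) = ENNReal.ofReal (exp (-u / B) / 2) := by
  have hpdf : EqOn (laplacePDF B) (fun x => 1 / (2 * B) * exp (B⁻¹ * x)) (Iio (-u)) :=
    fun x hx => by
      simp only [laplacePDF, abs_of_neg ((mem_Iio.1 hx).trans_le (by simpa using hu))]; ring_nf
  have hexp : IntegrableOn (fun x => 1 / (2 * B) * exp (B⁻¹ * x)) (Iio (-u)) :=
    ((integrableOn_exp_mul_Iic (by simpa using hB) (-u)).mono_set Iio_subset_Iic_self).const_mul _
  rw [laplaceMeasure, withDensity_apply _ measurableSet_Iio,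
    ← ofReal_integral_eq_lintegral_ofReal (hexp.congr_fun hpdf.symm measurableSet_Iio)
      (ae_of_all _ (laplacePDF_nonneg hB)),
    setIntegral_congr_fun measurableSet_Iio hpdf, integral_const_mul,
    ← integral_Iic_eq_integral_Iio, integral_exp_mul_Iic (by simpa using hB)]
  congr 1
  field_simp

lemma laplaceMeasure_setOf_lt_abs (hB : 0 < B) (hu : 0 ≤ u) :
    laplaceMeasure B {x | u < |x|} = ENNReal.ofReal (exp (-u / B)) := by
  have hsplit : {x : ℝ | u < |x|} = Iio (-u) ∪ Ioi u := by
    ext x; simp [lt_abs, or_comm, lt_neg]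
  rw [hsplit, measure_union ((Iic_disjoint_Ioi (by linarith)).mono_left Iio_subset_Iic_self)
      measurableSet_Ioi, laplaceMeasure_Iio hB hu, laplaceMeasure_Ioi hB hu,
    ← ENNReal.ofReal_add (by positivity) (by positivity), add_halves]

end Laplace

namespace ProbabilityTheory.HasSubgaussianMGF

variable {Ω : Type*} {mΩ : MeasurableSpace Ω} {μ : Measure Ω} [IsFiniteMeasure μ]
  {X : Ω → ℝ} {c : ℝ≥0}

lemma measureReal_le_abs_le (h : HasSubgaussianMGF X c μ) {ε : ℝ} (hε : 0 ≤ ε) :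
    μ.real {ω | ε ≤ |X ω|} ≤ 2 * exp (-ε ^ 2 / (2 * c)) := by
  calc μ.real {ω | ε ≤ |X ω|} ≤ μ.real ({ω | ε ≤ X ω} ∪ {ω | ε ≤ (-X) ω}) :=
        measureReal_mono fun ω (hω : ε ≤ |X ω|) => by
          rcases le_abs'.1 hω with h | h
          · exact Or.inr (show ε ≤ -X ω by linarith)
          · exact Or.inl h
    _ ≤ μ.real {ω | ε ≤ X ω} + μ.real {ω | ε ≤ (-X) ω} := measureReal_union_le _ _
    _ ≤ exp (-ε ^ 2 / (2 * c)) + exp (-ε ^ 2 / (2 * c)) :=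
        add_le_add (h.measure_ge_le hε) (h.neg.measure_ge_le hε)
    _ = 2 * exp (-ε ^ 2 / (2 * c)) := by ring

end ProbabilityTheory.HasSubgaussianMGF

section Estimates

variable {Ω E : Type*} {mΩ : MeasurableSpace Ω} {mE : MeasurableSpace E} {μ : Measure Ω}

lemma measure_lt_abs_le_add {U V W : Ω → ℝ} (hW : ∀ ω, |W ω| ≤ |U ω| + |V ω|) (t : ℝ) :
    μ {ω | t < |W ω|} ≤ μ {ω | t / 2 < |U ω|} + μ {ω | t / 2 < |V ω|} :=
  (measure_mono fun ω (hω : t < |W ω|) => by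
    by_contra! h
    simp only [mem_union, mem_ofPred_eq, not_or, not_lt] at h
    linarith [hW ω]).trans (measure_union_le _ _)

lemma measure_setOf_exists_exists_le {A Y : Type*} [Fintype A] [Fintype Y]
    {P : A → Y → Ω → Prop} {c : ℝ} (h : ∀ a y, μ {ω | P a y ω} ≤ ENNReal.ofReal c) :
    μ {ω | ∃ a y, P a y ω} ≤ ENNReal.ofReal (Fintype.card A * Fintype.card Y * c) := by
  have hunion : {ω | ∃ a y, P a y ω} = ⋃ q : A × Y, {ω | P q.1 q.2 ω} := by
    ext ω; simp
  calc μ {ω | ∃ a y, P a y ω} ≤ ∑ q : A × Y, μ {ω | P q.1 q.2 ω} :=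
        hunion ▸ measure_iUnion_fintype_le μ _
    _ ≤ Fintype.card (A × Y) • ENNReal.ofReal c :=
        Finset.sum_le_card_nsmul _ _ _ fun q _ => h q.1 q.2
    _ = ENNReal.ofReal (Fintype.card A * Fintype.card Y * c) := by
        rw [nsmul_eq_mul, ENNReal.ofReal_mul (by positivity), Fintype.card_prod]
        norm_cast

noncomputable section

def empiricalFreq {m : ℕ} (S : Set E) (X : Fin m → Ω → E) (ω : Ω) : ℝ :=
  1 / (m : ℝ) * ∑ i, S.indicator (fun _ => (1 : ℝ)) (X i ω)

end

section Hoeffding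

variable [IsProbabilityMeasure μ] {S : Set E}

lemma hasSubgaussianMGF_indicator_comp_sub {Y : Ω → E} (hY : Measurable Y)
    (hS : MeasurableSet S) :
    HasSubgaussianMGF (fun ω => S.indicator (fun _ => (1 : ℝ)) (Y ω) - μ.real (Y ⁻¹' S))
      (1 / 4) μ := by
  have hmean : μ[fun ω => S.indicator (fun _ => (1 : ℝ)) (Y ω)] = μ.real (Y ⁻¹' S) := by
    simp_rw [← indicator_comp_right (g := fun _ => (1 : ℝ)) Y]
    exact integral_indicator_one (hS.preimage hY)
  have h := hasSubgaussianMGF_of_mem_Icc (μ := μ) (a := 0) (b := 1)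
    (X := fun ω => S.indicator (fun _ => (1 : ℝ)) (Y ω))
    ((measurable_const.indicator hS).comp hY).aemeasurable
    (ae_of_all _ fun ω => ⟨indicator_nonneg (fun _ _ => zero_le_one) _,
      indicator_le_self' (fun _ _ => zero_le_one) _⟩)
  rw [hmean] at h
  convert h using 1
  ext; norm_num

lemma measureReal_le_abs_sum_indicator_sub_le {ι : Type*} [Fintype ι] {X : ι → Ω → E} {p s : ℝ}
    (hX : ∀ i, Measurable (X i)) (hindep : iIndepFun X μ) (hS : MeasurableSet S)
    (hp : ∀ i, μ.real (X i ⁻¹' S) = p) (hs : 0 ≤ s) :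
    μ.real {ω | s ≤ |∑ i, (S.indicator (fun _ => (1 : ℝ)) (X i ω) - p)|} ≤
      2 * exp (-2 * s ^ 2 / Fintype.card ι) := by
  have hsub : ∀ i ∈ Finset.univ, HasSubgaussianMGF
      (fun ω => S.indicator (fun _ => (1 : ℝ)) (X i ω) - p) (1 / 4) μ :=
    fun i _ => hp i ▸ hasSubgaussianMGF_indicator_comp_sub (hX i) hS
  have hZindep : iIndepFun (fun i ω => S.indicator (fun _ => (1 : ℝ)) (X i ω) - p) μ :=
    hindep.comp (fun _ e => S.indicator (fun _ => (1 : ℝ)) e - p)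
      fun _ => (measurable_const.indicator hS).sub_const p
  refine ((HasSubgaussianMGF.sum_of_iIndepFun hZindep hsub).measureReal_le_abs_le hs).trans_eq ?_
  simp only [Finset.sum_const, Finset.card_univ, nsmul_eq_mul]
  push_cast
  ring_nf

variable {m : ℕ} {X : Fin m → Ω → E} {p : ℝ}

lemma measure_lt_abs_empiricalFreq_sub_le (hm : 0 < m) (hX : ∀ i, Measurable (X i))
    (hindep : iIndepFun X μ) (hS : MeasurableSet S) (hp : ∀ i, μ.real (X i ⁻¹' S) = p)
    {s : ℝ} (hs : 0 ≤ s) :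
    μ {ω | s < |empiricalFreq S X ω - p|} ≤ ENNReal.ofReal (2 * exp (-2 * m * s ^ 2)) := by
  have hm' : (0 : ℝ) < m := Nat.cast_pos.2 hm
  have hsum : ∀ ω, ∑ i, (S.indicator (fun _ => (1 : ℝ)) (X i ω) - p) =
      m * (empiricalFreq S X ω - p) := fun ω => by
    simp only [empiricalFreq, Finset.sum_sub_distrib, Finset.sum_const, Finset.card_univ,
      Fintype.card_fin, nsmul_eq_mul]
    field_simp
  calc μ {ω | s < |empiricalFreq S X ω - p|}
      ≤ μ {ω | m * s ≤ |∑ i, (S.indicator (fun _ => (1 : ℝ)) (X i ω) - p)|} :=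
        measure_mono fun ω (hω : s < |empiricalFreq S X ω - p|) => by
          rw [mem_ofPred_eq, hsum, abs_mul, abs_of_pos hm']
          exact mul_le_mul_of_nonneg_left hω.le hm'.le
    _ = ENNReal.ofReal
          (μ.real {ω | m * s ≤ |∑ i, (S.indicator (fun _ => (1 : ℝ)) (X i ω) - p)|}) :=
        (ofReal_measureReal (measure_ne_top _ _)).symm
    _ ≤ ENNReal.ofReal (2 * exp (-2 * m * s ^ 2)) := by
        refine ENNReal.ofReal_le_ofReal ((measureReal_le_abs_sum_indicator_sub_le hX hindep hS hp
          (by positivity)).trans_eq ?_)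
        rw [Fintype.card_fin]
        field_simp

lemma measure_lt_abs_empiricalFreq_add_sub_le (hm : 0 < m) (hX : ∀ i, Measurable (X i))
    (hindep : iIndepFun X μ) (hS : MeasurableSet S) (hp : ∀ i, μ.real (X i ⁻¹' S) = p)
    {r : Ω → ℝ} (hr : Measurable r) {B : ℝ} (hB : 0 < B) (hlaw : μ.map r = laplaceMeasure B)
    {t : ℝ} (ht : 0 ≤ t) :
    μ {ω | t < |(empiricalFreq S X ω + r ω / m) - p|} ≤
      ENNReal.ofReal (2 * exp (-m * t ^ 2 / 2)) + ENNReal.ofReal (exp (-(m * t / 2) / B)) := by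
  have hm' : (0 : ℝ) < m := Nat.cast_pos.2 hm
  have hnoise : μ {ω | t / 2 < |r ω / m|} = ENNReal.ofReal (exp (-(m * t / 2) / B)) := by
    have hpre : {ω | t / 2 < |r ω / m|} = r ⁻¹' {x | m * t / 2 < |x|} := by
      ext ω
      simp only [mem_ofPred_eq, mem_preimage, abs_div, abs_of_pos hm', lt_div_iff₀ hm']
      ring_nf
    rw [hpre, ← Measure.map_apply hr (measurableSet_lt measurable_const measurable_abs), hlaw,
      laplaceMeasure_setOf_lt_abs hB (by positivity)]
  calc μ {ω | t < |(empiricalFreq S X ω + r ω / m) - p|}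
      ≤ μ {ω | t / 2 < |empiricalFreq S X ω - p|} + μ {ω | t / 2 < |r ω / m|} :=
        measure_lt_abs_le_add (fun ω => (abs_add_le _ _).trans_eq' (by ring_nf)) t
    _ ≤ ENNReal.ofReal (2 * exp (-2 * m * (t / 2) ^ 2)) +
          ENNReal.ofReal (exp (-(m * t / 2) / B)) :=
        add_le_add (measure_lt_abs_empiricalFreq_sub_le hm hX hindep hS hp (by positivity))
          hnoise.le
    _ = ENNReal.ofReal (2 * exp (-m * t ^ 2 / 2)) + ENNReal.ofReal (exp (-(m * t / 2) / B)) := by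
        ring_nf

end Hoeffding

end Estimates

lemma mul_exp_neg_mul_sq_div_two_le {K δ t N : ℝ} (hK : 0 ≤ K) (hδ : 0 < δ) (ht : 0 < t)
    (hN : 2 / t ^ 2 * log (K / δ) ≤ N) : K * exp (-N * t ^ 2 / 2) ≤ δ := by
  rcases hK.eq_or_lt with rfl | hK
  · simpa using hδ.le
  have hlog : log (K / δ) ≤ N * t ^ 2 / 2 := by
    rw [div_mul_eq_mul_div, div_le_iff₀ (by positivity)] at hN
    linarith
  have hK : K ≤ exp (N * t ^ 2 / 2) * δ :=
    (div_le_iff₀ hδ).1 ((log_le_iff_le_exp (div_pos hK hδ)).1 hlog)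
  rw [neg_mul, neg_div, exp_neg, ← div_eq_mul_inv, div_le_iff₀ (exp_pos _)]
  linarith

theorem private_audit_sample_size_general {Ω : Type*} [MeasureSpace Ω]
    [IsProbabilityMeasure (volume : Measure Ω)]
    {E' : Type*} [MeasurableSpace E']
    {A Y : Type*} [Fintype A] [Nonempty A] [Fintype Y]
    (n : A → ℕ) (hn : ∀ a, 0 < n a)
    (X : (a : A) → Fin (n a) → Ω → E')
    (hmeas : ∀ a i, Measurable (X a i))
    (hindep : ∀ a, iIndepFun (X a) volume)
    (hident : ∀ a i, IdentDistrib (X a i) (X a ⟨0, hn a⟩) volume volume)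
    (Es : A → Y → Set E') (hEs : ∀ a y, MeasurableSet (Es a y))
    (ε : ℝ)
    (r : A → Y → Ω → ℝ) (hrmeas : ∀ a y, Measurable (r a y))
    (hlaw : ∀ a y, Measure.map (r a y) volume =
      volume.withDensity
        (fun x : ℝ => ENNReal.ofReal ((1 / (2 * (1 / ε))) * Real.exp (-|x| / (1 / ε)))))
    (nmin : ℕ) (hnmin : nmin = Finset.univ.inf' Finset.univ_nonempty n)
    (t : ℝ) (ht : 0 < t) (htε : t ≤ ε) :
    volume {ω : Ω | ∃ a : A, ∃ y : Y,
        t < |((1 / (n a : ℝ)) *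
                ∑ i : Fin (n a), (Es a y).indicator (fun _ => (1 : ℝ)) (X a i ω)
              + r a y ω / (n a : ℝ)) -
            (volume (X a ⟨0, hn a⟩ ⁻¹' Es a y)).toReal|} ≤
      ENNReal.ofReal (3 * (Fintype.card A) * (Fintype.card Y) *
        Real.exp (-nmin * t ^ 2 / 2)) ∧
    (∀ δ : ℝ, 0 < δ →
      (nmin : ℝ) ≥ (2 / t ^ 2) *
          Real.log (3 * (Fintype.card A) * (Fintype.card Y) / δ) →
      volume {ω : Ω | ∃ a : A, ∃ y : Y,
          t < |((1 / (n a : ℝ)) *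
                  ∑ i : Fin (n a), (Es a y).indicator (fun _ => (1 : ℝ)) (X a i ω)
                + r a y ω / (n a : ℝ)) -
              (volume (X a ⟨0, hn a⟩ ⁻¹' Es a y)).toReal|} ≤
        ENNReal.ofReal δ) ∧
    (∀ α δ : ℝ, t = α / 2 →
      (2 / t ^ 2) * Real.log (3 * (Fintype.card A) * (Fintype.card Y) / δ) =
        (8 / α ^ 2) * Real.log (3 * (Fintype.card A) * (Fintype.card Y) / δ)) := by
  have hgroup : ∀ a y, volume {ω | t < |(empiricalFreq (Es a y) (X a) ω + r a y ω / n a) -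
      (volume (X a ⟨0, hn a⟩ ⁻¹' Es a y)).toReal|} ≤
        ENNReal.ofReal (3 * exp (-nmin * t ^ 2 / 2)) := fun a y => by
    have hna : (nmin : ℝ) ≤ n a := Nat.cast_le.2 (hnmin ▸ Finset.inf'_le n (Finset.mem_univ a))
    refine (measure_lt_abs_empiricalFreq_add_sub_le (hn a) (hmeas a) (hindep a) (hEs a y)
      (fun i => congrArg ENNReal.toReal ((hident a i).measure_mem_eq (hEs a y))) (hrmeas a y)
      (one_div_pos.2 (ht.trans_le htε)) (hlaw a y) ht.le).trans ?_
    rw [← ENNReal.ofReal_add (by positivity) (by positivity)]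
    refine ENNReal.ofReal_le_ofReal ?_
    have hnoise : exp (-(n a * t / 2) / (1 / ε)) ≤ exp (-n a * t ^ 2 / 2) :=
      exp_le_exp.2 (by
        rw [div_div_eq_mul_div, div_one]
        nlinarith [mul_le_mul_of_nonneg_left htε (by positivity : (0 : ℝ) ≤ n a * t)])
    have hmin : exp (-n a * t ^ 2 / 2) ≤ exp (-nmin * t ^ 2 / 2) :=
      exp_le_exp.2 (by nlinarith)
    linarith
  have hmain : _ ≤ ENNReal.ofReal (3 * (Fintype.card A) * (Fintype.card Y) *
      exp (-nmin * t ^ 2 / 2)) :=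
    (measure_setOf_exists_exists_le hgroup).trans_eq (by ring_nf)
  refine ⟨hmain, fun δ hδ hN => hmain.trans (ENNReal.ofReal_le_ofReal ?_),
    fun α δ h => by subst h; ring⟩
  exact mul_exp_neg_mul_sq_div_two_le (by positivity) hδ ht hN

theorem private_audit_sample_size {Ω : Type*} [MeasureSpace Ω]
    [IsProbabilityMeasure (volume : Measure Ω)]
    {E' : Type*} [MeasurableSpace E']
    {A Y : Type*} [Fintype A] [Nonempty A] [Fintype Y] [Nonempty Y]
    (n : A → ℕ) (hn : ∀ a, 0 < n a)
    (X : (a : A) → Fin (n a) → Ω → E')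
    (hmeas : ∀ a i, Measurable (X a i))
    (hindep : ∀ a, iIndepFun (X a) volume)
    (hident : ∀ a i, IdentDistrib (X a i) (X a ⟨0, hn a⟩) volume volume)
    (Es : A → Y → Set E') (hEs : ∀ a y, MeasurableSet (Es a y))
    (ε : ℝ) (hε : 0 < ε)
    (r : A → Y → Ω → ℝ) (hrmeas : ∀ a y, Measurable (r a y))
    (hlaw : ∀ a y, Measure.map (r a y) volume =
      volume.withDensity
        (fun x : ℝ => ENNReal.ofReal ((1 / (2 * (1 / ε))) * Real.exp (-|x| / (1 / ε)))))
    (hrindep : ∀ a y, IndepFun (fun ω => fun i => X a i ω) (r a y) volume)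
    (nmin : ℕ) (hnmin : nmin = Finset.univ.inf' Finset.univ_nonempty n)
    (t : ℝ) (ht : 0 < t) (htε : t ≤ ε) :
    volume {ω : Ω | ∃ a : A, ∃ y : Y,
        t < |((1 / (n a : ℝ)) *
                ∑ i : Fin (n a), (Es a y).indicator (fun _ => (1 : ℝ)) (X a i ω)
              + r a y ω / (n a : ℝ)) -
            (volume (X a ⟨0, hn a⟩ ⁻¹' Es a y)).toReal|} ≤
      ENNReal.ofReal (3 * (Fintype.card A) * (Fintype.card Y) *
        Real.exp (-nmin * t ^ 2 / 2)) ∧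
    (∀ δ : ℝ, 0 < δ →
      (nmin : ℝ) ≥ (2 / t ^ 2) *
          Real.log (3 * (Fintype.card A) * (Fintype.card Y) / δ) →
      volume {ω : Ω | ∃ a : A, ∃ y : Y,
          t < |((1 / (n a : ℝ)) *
                  ∑ i : Fin (n a), (Es a y).indicator (fun _ => (1 : ℝ)) (X a i ω)
                + r a y ω / (n a : ℝ)) -
              (volume (X a ⟨0, hn a⟩ ⁻¹' Es a y)).toReal|} ≤
        ENNReal.ofReal δ) ∧
    (∀ α δ : ℝ, t = α / 2 →
      (2 / t ^ 2) * Real.log (3 * (Fintype.card A) * (Fintype.card Y) / δ) =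
        (8 / α ^ 2) * Real.log (3 * (Fintype.card A) * (Fintype.card Y) / δ)) :=
  private_audit_sample_size_general n hn X hmeas hindep hident Es hEs ε r hrmeas hlaw nmin hnmin t
    ht htε
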